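/- ∫_{-1}^{1} (π/2 + arcsin x) · (arctan x)/(π x) dx = G, where G is Catalan's constant. -/

import Mathlib

/-!
The arcsine CDF `w` satisfies `w (-x) + w x = 1`, while `arctan x / x` is even, so folding the
integral over `[-1, 1]` onto `[0, 1]` removes the weight and leaves `∫₀¹ arctan x / x dx`.
Integrating the Taylor series `∑ (-1)ⁿ x²ⁿ / (2n + 1)` term by term gives Catalan's series; the
interchange is justified because the integrals of the absolute values, `1 / (2n + 1)²`, are
summable.
-/

open Real MeasureTheory Set

namespace intervalIntegral

theorem integral_neg_self_eq_integral_comp_neg_add {E : Type*} [NormedAddCommGroup E]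
    [NormedSpace ℝ E] {f : ℝ → E} {a : ℝ} (hf : IntervalIntegrable f volume (-a) a) :
    ∫ x in -a..a, f x = ∫ x in 0..a, (f (-x) + f x) := by
  have hleft : IntervalIntegrable f volume (-a) 0 :=
    hf.mono_set (by grind [uIcc_subset_uIcc_iff_le])
  have hright : IntervalIntegrable f volume 0 a :=
    hf.mono_set (by grind [uIcc_subset_uIcc_iff_le])
  have hleft_neg : IntervalIntegrable (fun x ↦ f (-x)) volume 0 a := by
    simpa using ((IntervalIntegrable.iff_comp_neg (f := f)).1 hleft).symm
  rw [integral_add hleft_neg hright, integral_comp_neg, neg_zero,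
    integral_add_adjacent_intervals hleft hright]

theorem integral_neg_self_mul_eq_of_add_comp_neg_eq_one {w h : ℝ → ℝ} {a : ℝ}
    (hw : ∀ x, w (-x) + w x = 1) (hh : ∀ x, h (-x) = h x)
    (hwh : IntervalIntegrable (fun x ↦ w x * h x) volume (-a) a) :
    ∫ x in -a..a, w x * h x = ∫ x in 0..a, h x := by
  rw [integral_neg_self_eq_integral_comp_neg_add hwh]
  congr 1 with x
  rw [hh, ← add_mul, hw, one_mul]

end intervalIntegral

noncomputable def arcsineCDF (x : ℝ) : ℝ := (π / 2 + arcsin x) / π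

theorem arcsineCDF_neg_add (x : ℝ) : arcsineCDF (-x) + arcsineCDF x = 1 := by
  simp only [arcsineCDF, arcsin_neg]
  field_simp [pi_ne_zero]
  ring

theorem continuous_arcsineCDF : Continuous arcsineCDF := by
  unfold arcsineCDF
  fun_prop

namespace Real

theorem abs_arctan_le_abs (x : ℝ) : |arctan x| ≤ |x| := by
  wlog hx : 0 ≤ x with H
  · simpa [arctan_neg] using H (-x) (by linarith)
  have harctan : 0 ≤ arctan x := arctan_nonneg.mpr hx
  rw [abs_of_nonneg hx, abs_of_nonneg harctan]
  calc arctan x ≤ tan (arctan x) := le_tan harctan (arctan_lt_pi_div_two x)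
    _ = x := tan_arctan x

theorem abs_arctan_div_self_le_one (x : ℝ) : |arctan x / x| ≤ 1 := by
  rcases eq_or_ne x 0 with rfl | hx
  · simp
  rw [abs_div, div_le_one (abs_pos.mpr hx)]
  exact abs_arctan_le_abs x

theorem arctan_neg_div_neg (x : ℝ) : arctan (-x) / -x = arctan x / x := by
  rw [arctan_neg, neg_div_neg_eq]

/- Not continuous at `0`, where the quotient takes the junk value `0`; bounded by `1` instead. -/
theorem intervalIntegrable_arctan_div_self (a b : ℝ) :
    IntervalIntegrable (fun x ↦ arctan x / x) volume a b := by
  refine (intervalIntegrable_const (c := (1 : ℝ))).mono_fun ?_ (ae_of_all _ fun x ↦ ?_)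
  · exact (continuous_arctan.measurable.div measurable_id).aestronglyMeasurable
  · simpa [abs_div] using abs_arctan_div_self_le_one x

theorem hasSum_arctan_div_self {x : ℝ} (hx0 : x ≠ 0) (hx : |x| < 1) :
    HasSum (fun n : ℕ ↦ (-1) ^ n * (x ^ (2 * n) / (2 * n + 1))) (arctan x / x) :=
  ((hasSum_arctan (by rwa [norm_eq_abs])).div_const x).congr_fun fun n ↦ by
    rw [pow_succ]
    push_cast
    field_simp

end Real

theorem integral_pow_two_mul_div_two_mul_add_one (n : ℕ) :
    ∫ x in (0 : ℝ)..1, x ^ (2 * n) / (2 * n + 1) = 1 / (2 * n + 1) ^ 2 := by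
  rw [intervalIntegral.integral_div, integral_pow]
  push_cast
  field_simp
  ring

theorem summable_one_div_two_mul_add_one_sq :
    Summable (fun n : ℕ ↦ (1 : ℝ) / (2 * n + 1) ^ 2) := by
  have := (summable_one_div_nat_pow.mpr one_lt_two).comp_injective
    (i := fun n : ℕ ↦ 2 * n + 1) (by intro m n h; simp at h; omega)
  simpa [Function.comp_def] using this

theorem Real.integral_arctan_div_self :
    ∫ x in (0 : ℝ)..1, arctan x / x = ∑' n : ℕ, (-1 : ℝ) ^ n / (2 * n + 1) ^ 2 := by
  set F : ℕ → ℝ → ℝ := fun n x ↦ (-1) ^ n * (x ^ (2 * n) / (2 * n + 1))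
  have hnorm (n : ℕ) (x : ℝ) : ‖F n x‖ = x ^ (2 * n) / (2 * n + 1) := by
    rw [norm_mul, norm_pow, norm_neg, norm_one, one_pow, one_mul,
      norm_of_nonneg (by rw [pow_mul]; positivity)]
  have hint (n : ℕ) : Integrable (F n) (volume.restrict (Ioc 0 1)) :=
    (by fun_prop : Continuous (F n)).integrableOn_Ioc
  have hsum : Summable fun n ↦ ∫ x in Ioc 0 1, ‖F n x‖ := by
    simpa only [hnorm, ← intervalIntegral.integral_of_le zero_le_one,
      integral_pow_two_mul_div_two_mul_add_one] using summable_one_div_two_mul_add_one_sq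
  have hae : ∀ᵐ x ∂volume.restrict (Ioc 0 1), ∑' n, F n x = arctan x / x := by
    rw [← Measure.restrict_congr_set Ioo_ae_eq_Ioc]
    filter_upwards [ae_restrict_mem measurableSet_Ioo] with x hx
    exact (hasSum_arctan_div_self hx.1.ne' (abs_lt.2 ⟨by linarith [hx.1], hx.2⟩)).tsum_eq
  have hsum_integral := hasSum_integral_of_summable_integral_norm hint hsum
  rw [integral_congr_ae hae, ← intervalIntegral.integral_of_le zero_le_one] at hsum_integral
  refine (hsum_integral.congr_fun fun n ↦ ?_).tsum_eq.symm
  rw [← intervalIntegral.integral_of_le zero_le_one, intervalIntegral.integral_const_mul,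
    integral_pow_two_mul_div_two_mul_add_one, mul_one_div]

theorem catalan_arcsin_weight :
    ∫ x in (-1:ℝ)..1, (Real.pi / 2 + Real.arcsin x) * (Real.arctan x / (Real.pi * x))
      = ∑' n : ℕ, (-1 : ℝ)^n / (2 * n + 1)^2 := by
  have hweight (x : ℝ) :
      (π / 2 + arcsin x) * (arctan x / (π * x)) = arcsineCDF x * (arctan x / x) := by
    unfold arcsineCDF
    ring
  simp_rw [hweight]
  rw [intervalIntegral.integral_neg_self_mul_eq_of_add_comp_neg_eq_one arcsineCDF_neg_add
    arctan_neg_div_neg ((intervalIntegrable_arctan_div_self _ _).continuousOn_mul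
      continuous_arcsineCDF.continuousOn)]
  exact integral_arctan_div_self
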